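/- Let M be the loop of determinant-1 Zorn vector matrices over the finite field F_q. The center Z(M) has order 1 if q is even (characteristic 2), and order 2 if q is odd; in the odd case Z(M) = {I, −I} where I is the identity Zorn matrix. -/

import Mathlib

open Matrix

/-- A Zorn vector matrix `[[a, α], [β, b]]` over a field `F`. -/
structure ZornMatrix (F : Type*) [Field F] where
  a : F
  α : Fin 3 → F
  β : Fin 3 → F
  b : F

namespace ZornMatrix

variable {F : Type*} [Field F]

/-- Zorn's vector matrix multiplication. -/
def mul (M N : ZornMatrix F) : ZornMatrix F :=
  ⟨M.a * N.a + M.α ⬝ᵥ N.β,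
   M.a • N.α + N.b • M.α - crossProduct M.β N.β,
   N.a • M.β + M.b • N.β + crossProduct M.α N.α,
   M.β ⬝ᵥ N.α + M.b * N.b⟩

/-- The determinant of a Zorn vector matrix. -/
def det (M : ZornMatrix F) : F := M.a * M.b - M.α ⬝ᵥ M.β

/-- The identity Zorn vector matrix. -/
def id : ZornMatrix F := ⟨1, 0, 0, 1⟩

end ZornMatrix

/-! A central element commutes in particular with the elementary unipotent matrices of
determinant one, which forces it to be a scalar `c • I`, and `det = 1` gives `c = ±1`.
Conversely Zorn multiplication is bilinear, so scalars commute and associate with everything.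
Hence the center is `{I, -I}`, and these coincide exactly in characteristic 2. -/

namespace ZornMatrix

variable {F : Type*} [Field F]

attribute [ext] ZornMatrix

def scalar (c : F) : ZornMatrix F := ⟨c, 0, 0, c⟩

instance : SMul F (ZornMatrix F) := ⟨fun c x => ⟨c * x.a, c • x.α, c • x.β, c * x.b⟩⟩

@[simp] lemma smul_a (c : F) (x : ZornMatrix F) : (c • x).a = c * x.a := rfl
@[simp] lemma smul_α (c : F) (x : ZornMatrix F) : (c • x).α = c • x.α := rfl
@[simp] lemma smul_β (c : F) (x : ZornMatrix F) : (c • x).β = c • x.β := rfl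
@[simp] lemma smul_b (c : F) (x : ZornMatrix F) : (c • x).b = c * x.b := rfl

lemma det_scalar (c : F) : (scalar c).det = c * c := by
  simp [det, scalar]

lemma scalar_mul (c : F) (x : ZornMatrix F) : mul (scalar c) x = c • x := by
  ext <;> simp [mul, scalar]

lemma mul_scalar (c : F) (x : ZornMatrix F) : mul x (scalar c) = c • x := by
  ext <;> simp [mul, scalar, mul_comm]

lemma smul_mul (c : F) (x y : ZornMatrix F) : mul (c • x) y = c • mul x y := by
  ext <;> simp [mul] <;> ring

lemma mul_smul (c : F) (x y : ZornMatrix F) : mul x (c • y) = c • mul x y := by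
  ext <;> simp [mul] <;> ring

variable (F) in
def center : Set (ZornMatrix F) :=
  {z : ZornMatrix F | z.det = 1 ∧
    (∀ x : ZornMatrix F, x.det = 1 → mul z x = mul x z) ∧
    (∀ x y : ZornMatrix F, x.det = 1 → y.det = 1 →
      mul z (mul x y) = mul (mul z x) y ∧
      mul x (mul z y) = mul (mul x z) y ∧
      mul (mul x y) z = mul x (mul y z))}

lemma scalar_mem_center {c : F} (hc : c * c = 1) : scalar c ∈ center F := by
  refine ⟨by rw [det_scalar, hc], fun x _ => by rw [scalar_mul, mul_scalar],
    fun x y _ _ => ⟨?_, ?_, ?_⟩⟩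
  · rw [scalar_mul, scalar_mul, smul_mul]
  · rw [scalar_mul, mul_scalar, mul_smul, smul_mul]
  · rw [mul_scalar, mul_scalar, mul_smul]

/-- Commuting with the unipotent elements `[[1, eᵢ], [0, 1]]` and `[[1, 0], [eᵢ, 1]]`
kills the vector parts of `z` and equates its diagonal entries. -/
lemma eq_scalar_of_commute {z : ZornMatrix F}
    (hz : ∀ x : ZornMatrix F, x.det = 1 → mul z x = mul x z) : z = scalar z.a := by
  have hβ : z.β = 0 := by
    funext i
    simpa [mul] using congrArg b (hz ⟨1, Pi.single i 1, 0, 1⟩ (by simp [det]))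
  have hα : z.α = 0 := by
    funext i
    simpa [mul] using congrArg a (hz ⟨1, 0, Pi.single i 1, 1⟩ (by simp [det]))
  have hab : z.a = z.b := by
    simpa [mul, hα, hβ] using
      congrFun (congrArg α (hz ⟨1, Pi.single 0 1, 0, 1⟩ (by simp [det]))) 0
  ext <;> simp [scalar, hα, hβ, hab]

lemma mem_center_iff {z : ZornMatrix F} : z ∈ center F ↔ ∃ c : F, c * c = 1 ∧ z = scalar c := by
  refine ⟨fun ⟨hdet, hcomm, _⟩ => ⟨z.a, ?_, eq_scalar_of_commute hcomm⟩, ?_⟩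
  · rwa [eq_scalar_of_commute hcomm, det_scalar] at hdet
  · rintro ⟨c, hc, rfl⟩
    exact scalar_mem_center hc

theorem center_eq : center F = {scalar 1, scalar (-1)} := by
  ext z
  simp only [mem_center_iff, mul_self_eq_one_iff, Set.mem_insert_iff, Set.mem_singleton_iff]
  constructor
  · rintro ⟨c, rfl | rfl, rfl⟩ <;> simp
  · rintro (rfl | rfl) <;> simp

end ZornMatrix

open ZornMatrix in
theorem stmt9_general {F : Type*} [Field F] :
    letI Z : Set (ZornMatrix F) :=
      {z : ZornMatrix F | z.det = 1 ∧
        (∀ x : ZornMatrix F, x.det = 1 → mul z x = mul x z) ∧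
        (∀ x y : ZornMatrix F, x.det = 1 → y.det = 1 →
          mul z (mul x y) = mul (mul z x) y ∧
          mul x (mul z y) = mul (mul x z) y ∧
          mul (mul x y) z = mul x (mul y z))}
    (ringChar F = 2 → Z = {ZornMatrix.id} ∧ Nat.card Z = 1) ∧
    (ringChar F ≠ 2 →
      Z = {ZornMatrix.id, ⟨-1, 0, 0, -1⟩} ∧ Nat.card Z = 2) := by
  change (ringChar F = 2 → center F = {scalar 1} ∧ Nat.card (center F) = 1) ∧
    (ringChar F ≠ 2 → center F = {scalar 1, scalar (-1)} ∧ Nat.card (center F) = 2)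
  refine ⟨fun hchar => ?_, fun hchar => ?_⟩
  · have : CharP F 2 := hchar ▸ ringChar.charP F
    have hZ : center F = {scalar 1} := by
      rw [center_eq, CharTwo.neg_eq, Set.pair_eq_singleton]
    simp [hZ]
  · have hne : (scalar 1 : ZornMatrix F) ≠ scalar (-1) := fun h =>
      Ring.neg_one_ne_one_of_char_ne_two hchar (congrArg a h).symm
    rw [center_eq, Nat.card_coe_set_eq, Set.ncard_pair hne]
    exact ⟨rfl, rfl⟩

open ZornMatrix in
/-- The center of the loop `M` of determinant-one Zorn vector matrices over `F_q` is
trivial if `q` is even (characteristic 2), and equals `{I, -I}` (of order 2) if `q` is odd. -/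
theorem stmt9 {F : Type*} [Field F] [Fintype F] :
    letI Z : Set (ZornMatrix F) :=
      {z : ZornMatrix F | z.det = 1 ∧
        (∀ x : ZornMatrix F, x.det = 1 → mul z x = mul x z) ∧
        (∀ x y : ZornMatrix F, x.det = 1 → y.det = 1 →
          mul z (mul x y) = mul (mul z x) y ∧
          mul x (mul z y) = mul (mul x z) y ∧
          mul (mul x y) z = mul x (mul y z))}
    (ringChar F = 2 → Z = {ZornMatrix.id} ∧ Nat.card Z = 1) ∧
    (ringChar F ≠ 2 →
      Z = {ZornMatrix.id, ⟨-1, 0, 0, -1⟩} ∧ Nat.card Z = 2) :=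
  stmt9_general
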